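/- Let K be an arbitrary field and let f(X) ∈ K[[X]] satisfy f(0) = 0. Let f(XY) ∈ K[[X,Y]] denote the series obtained by substituting XY for X in f. If g(X,Y) ∈ K[[X,Y]] satisfies g(X,Y)·(Y − f(XY)) = Y^2, then for every n ≥ 0 the coefficient of X^n Y^n in g equals the coefficient of X^n in f; i.e., the diagonal of Y^2/(Y − f(XY)) equals f. -/

import Mathlib

/-!
Write `g_{a,b}` for the coefficient of `XᵃYᵇ` in `g`. Comparing the coefficients of `XᵃY^{a+c+1}`
in `g · (Y - f(XY)) = Y²` links the diagonal `b - a = c` of `g` to the diagonal `c + 1`: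
`g_{a,a+c} = [a = 0 ∧ c = 1] + ∑_{i+k=a} g_{i,i+c+1} fₖ`.
As `f₀ = 0`, only terms with `i < a` survive, so induction on `a` shows that `g` vanishes on the
diagonals `c ≥ 2`. Hence `g_{a,a+1} = [a = 0]`, and then `g_{a,a} = ∑_{i+k=a} g_{i,i+1} fₖ = fₐ`.
-/

/-- Substitution `X ↦ XY` in a one-variable power series `f`, producing
`f(XY) ∈ K[[X,Y]]`: the coefficient of `Xᵃ Yᵇ` is `[Xᵃ] f` if `a = b`,
and `0` otherwise. -/
noncomputable def oneVarXY {K : Type*} [Field K] (f : PowerSeries K) :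
    MvPowerSeries (Fin 2) K :=
  fun d => if d 0 = d 1 then PowerSeries.coeff (d 0) f else 0

open MvPowerSeries Finset.HasAntidiagonal

noncomputable abbrev bidegree (a b : ℕ) : Fin 2 →₀ ℕ := Finsupp.single 0 a + Finsupp.single 1 b

@[simp]
lemma bidegree_apply_zero (a b : ℕ) : bidegree a b 0 = a := by simp

@[simp]
lemma bidegree_apply_one (a b : ℕ) : bidegree a b 1 = b := by simp

@[simp]
lemma bidegree_inj {a b a' b' : ℕ} : bidegree a b = bidegree a' b' ↔ a = a' ∧ b = b' :=
  ⟨fun h => ⟨by simpa using congr($h 0), by simpa using congr($h 1)⟩,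
    fun ⟨ha, hb⟩ => ha ▸ hb ▸ rfl⟩

lemma bidegree_add (a b a' b' : ℕ) :
    bidegree a b + bidegree a' b' = bidegree (a + a') (b + b') := by
  ext i
  fin_cases i <;> simp

section

variable {K : Type*} [Field K]

lemma coeff_oneVarXY (f : PowerSeries K) (e : Fin 2 →₀ ℕ) :
    coeff e (oneVarXY f) = if e 0 = e 1 then PowerSeries.coeff (e 0) f else 0 :=
  rfl

lemma coeff_bidegree_mul_oneVarXY (g : MvPowerSeries (Fin 2) K) (f : PowerSeries K) (a c : ℕ) :
    coeff (bidegree a (a + c)) (g * oneVarXY f) =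
      ∑ p ∈ antidiagonal a, coeff (bidegree p.1 (p.1 + c)) g * PowerSeries.coeff p.2 f := by
  rw [coeff_mul]
  symm
  refine Finset.sum_of_injOn (fun p => (bidegree p.1 (p.1 + c), bidegree p.2 p.2)) ?_ ?_ ?_ ?_
  · rintro ⟨i, k⟩ - ⟨i', k'⟩ - h
    simp_all
  · rintro ⟨i, k⟩ h
    simp only [Finset.mem_coe, mem_antidiagonal] at h ⊢
    rw [bidegree_add, ← h]
    congr 1
    omega
  · rintro ⟨d, e⟩ hde hne
    rw [mem_antidiagonal] at hde
    rw [coeff_oneVarXY]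
    dsimp only
    split_ifs with he
    · have h0 : d 0 + e 0 = a := by simpa using congr($hde 0)
      have h1 : d 1 + e 1 = a + c := by simpa using congr($hde 1)
      have hd : bidegree (d 0) (d 0 + c) = d := by
        ext i
        fin_cases i <;> simp
        omega
      have he' : bidegree (e 0) (e 0) = e := by
        ext i
        fin_cases i <;> simp [he]
      exact absurd ⟨(d 0, e 0), by simpa using h0, Prod.ext hd he'⟩ hne
    · exact mul_zero _
  · rintro ⟨i, k⟩ -
    simp [coeff_oneVarXY]

variable {f : PowerSeries K} {g : MvPowerSeries (Fin 2) K}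

lemma coeff_bidegree_eq_of_mul_Y_sub_oneVarXY (hg : g * (X 1 - oneVarXY f) = X 1 ^ 2)
    (a c : ℕ) :
    coeff (bidegree a (a + c)) g = (if a = 0 ∧ c = 1 then 1 else 0) +
      ∑ p ∈ antidiagonal a, coeff (bidegree p.1 (p.1 + (c + 1))) g * PowerSeries.coeff p.2 f := by
  have hmul_Y : coeff (bidegree a (a + (c + 1))) (g * X 1) = coeff (bidegree a (a + c)) g := by
    rw [show bidegree a (a + (c + 1)) = bidegree a (a + c) + Finsupp.single 1 1 by
      ext i; fin_cases i <;> simp; omega, X, coeff_add_mul_monomial, mul_one]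
  have hY_sq : bidegree a (a + (c + 1)) = Finsupp.single 1 2 ↔ a = 0 ∧ c = 1 := by
    rw [show Finsupp.single (1 : Fin 2) 2 = bidegree 0 2 by simp, bidegree_inj]
    omega
  have hcoeff := congr(coeff (bidegree a (a + (c + 1))) $hg)
  rw [mul_sub, map_sub, hmul_Y, coeff_bidegree_mul_oneVarXY, coeff_X_pow] at hcoeff
  simp only [hY_sq] at hcoeff
  linear_combination hcoeff

lemma coeff_bidegree_eq_zero_of_two_le (hf0 : PowerSeries.constantCoeff f = 0)
    (hg : g * (X 1 - oneVarXY f) = X 1 ^ 2) (a : ℕ) {c : ℕ} (hc : 2 ≤ c) :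
    coeff (bidegree a (a + c)) g = 0 := by
  induction a using Nat.strong_induction_on generalizing c with
  | _ a ih =>
    rw [coeff_bidegree_eq_of_mul_Y_sub_oneVarXY hg, if_neg (by omega), zero_add]
    refine Finset.sum_eq_zero fun ⟨i, k⟩ hik => ?_
    rw [mem_antidiagonal] at hik
    rcases Nat.eq_zero_or_pos k with rfl | hk
    · rw [PowerSeries.coeff_zero_eq_constantCoeff_apply, hf0, mul_zero]
    · rw [ih i (by omega) (by omega), zero_mul]

lemma coeff_bidegree_succ (hf0 : PowerSeries.constantCoeff f = 0)
    (hg : g * (X 1 - oneVarXY f) = X 1 ^ 2) (a : ℕ) :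
    coeff (bidegree a (a + 1)) g = if a = 0 then 1 else 0 := by
  rw [coeff_bidegree_eq_of_mul_Y_sub_oneVarXY hg, Finset.sum_eq_zero, add_zero]
  · simp
  · intro p _
    rw [coeff_bidegree_eq_zero_of_two_le hf0 hg _ le_rfl, zero_mul]

end

/-- If `f(0) = 0` and `g · (Y - f(XY)) = Y²` in `K[[X,Y]]`, then the diagonal
of `g = Y²/(Y - f(XY))` equals `f`:  `[Xⁿ Yⁿ] g = [Xⁿ] f` for all `n`. -/
theorem diagonal_geometric {K : Type*} [Field K]
    (f : PowerSeries K) (g : MvPowerSeries (Fin 2) K)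
    (hf0 : PowerSeries.constantCoeff f = 0)
    (hg : g * (MvPowerSeries.X 1 - oneVarXY f) = MvPowerSeries.X 1 ^ 2) :
    ∀ n : ℕ,
      MvPowerSeries.coeff (Finsupp.single 0 n + Finsupp.single 1 n) g =
        PowerSeries.coeff n f := by
  intro n
  calc coeff (bidegree n (n + 0)) g
      = ∑ p ∈ antidiagonal n, coeff (bidegree p.1 (p.1 + 1)) g * PowerSeries.coeff p.2 f := by
        simpa using coeff_bidegree_eq_of_mul_Y_sub_oneVarXY hg n 0
    _ = ∑ p ∈ antidiagonal n, if p.1 = 0 then PowerSeries.coeff p.2 f else 0 := by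
        simp only [coeff_bidegree_succ hf0 hg, ite_mul, one_mul, zero_mul]
    _ = PowerSeries.coeff n f := by
        simp [Finset.Nat.sum_antidiagonal_eq_sum_range_succ_mk]
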